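/- Fix ε > 0. For all sufficiently large n, the proportion of binary ±1 sequences A of length n with μ(A) > √(2n(log n - log log n + log 2 + ε)) is strictly less than 1; equivalently, there exists a sequence A ∈ {±1}^n with μ(A) ≤ √(2n(log n - log log n + log 2 + ε)). -/

import Mathlib

/-!
A union bound over the shifts `k`. For fixed `k`, the map sending `b` to its first `k` bits
together with the products `(b_j b_{j+k})_{j < n-k}` is injective, and `c_k` is the sum of those
products; so, up to a factor `2^k` in the count, `c_k` is a sum of `n - k` independent signs, and
Chernoff's bound gives `#{|c_k| > T} ≤ 2^{n+1} exp(-T² / 2(n-k))`. For `T² = 2nL` the terms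
decay geometrically in `k`, and the total is at most `2^n · 2 e^{-L} n / L`. With
`L = log n - log log n + log 2 + ε` this is `2^n · e^{-ε} log n / L`, and `log n / L → 1`.
-/

open scoped Classical

/-- The `j`-th entry (as `±1 : ℝ`) of the binary sequence encoded by `b`. -/
noncomputable def rad {n : ℕ} (b : Fin n → Bool) (j : ℕ) : ℝ :=
  if h : j < n then (if b ⟨j, h⟩ then 1 else -1) else 0

/-- The aperiodic autocorrelation at shift `k`. -/
noncomputable def autocorr {n : ℕ} (b : Fin n → Bool) (k : ℕ) : ℝ :=
  ∑ j ∈ Finset.range (n - k), rad b j * rad b (j + k)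

/-- The peak sidelobe level `μ(A) = max_{1 ≤ k ≤ n-1} |c_k|`. -/
noncomputable def psl {n : ℕ} (b : Fin n → Bool) : ℝ :=
  ⨆ k ∈ Finset.Icc 1 (n - 1), |autocorr b k|

open Finset Real Filter Topology

noncomputable def boolSign (c : Bool) : ℝ := if c then 1 else -1

noncomputable def signSum {m : ℕ} (x : Fin m → Bool) : ℝ := ∑ j, boolSign (x j)

lemma sum_exp_mul_signSum (m : ℕ) (t : ℝ) :
    ∑ x : Fin m → Bool, exp (t * signSum x) = (2 * cosh t) ^ m := by
  simp_rw [signSum, mul_sum, exp_sum]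
  rw [← Fintype.prod_sum (fun (_ : Fin m) (c : Bool) => exp (t * boolSign c)), prod_const,
    card_univ, Fintype.card_fin, Fintype.sum_bool, cosh_eq]
  congr 1
  simp only [boolSign, if_true, Bool.false_eq_true, if_false, mul_one, mul_neg]
  ring

lemma card_le_exp_mul_sum_exp {α : Type*} [Fintype α] (f : α → ℝ) {t : ℝ} (ht : 0 ≤ t)
    (T : ℝ) :
    (#{x | T ≤ f x} : ℝ) ≤ exp (-(t * T)) * ∑ x, exp (t * f x) := by
  rw [mul_sum, card_eq_sum_ones, Nat.cast_sum, Nat.cast_one]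
  calc ∑ x ∈ {x | T ≤ f x}, (1 : ℝ)
      ≤ ∑ x ∈ {x | T ≤ f x}, exp (-(t * T)) * exp (t * f x) := by
        refine sum_le_sum fun x hx => ?_
        rw [← exp_add, one_le_exp_iff]
        nlinarith [(mem_filter.1 hx).2]
    _ ≤ ∑ x, exp (-(t * T)) * exp (t * f x) :=
        sum_le_sum_of_subset_of_nonneg (filter_subset _ _) fun _ _ _ => by positivity

lemma card_le_of_sum_exp_eq_two_mul_cosh_pow {α : Type*} [Fintype α] {m : ℕ} (hm : 0 < m)
    (f : α → ℝ) (hf : ∀ t, ∑ x, exp (t * f x) = (2 * cosh t) ^ m) {T : ℝ}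
    (hT : 0 ≤ T) :
    (#{x | T ≤ f x} : ℝ) ≤ 2 ^ m * exp (-T ^ 2 / (2 * m)) := by
  set t := T / m
  have hm' : (0 : ℝ) < m := by exact_mod_cast hm
  calc (#{x | T ≤ f x} : ℝ) ≤ exp (-(t * T)) * (2 * cosh t) ^ m := by
        rw [← hf]; exact card_le_exp_mul_sum_exp f (by positivity) T
    _ ≤ exp (-(t * T)) * (2 * exp (t ^ 2 / 2)) ^ m := by
        gcongr; exact cosh_le_exp_half_sq t
    _ = 2 ^ m * exp (-T ^ 2 / (2 * m)) := by
        rw [mul_pow, ← exp_nat_mul, mul_left_comm, ← exp_add]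
        congr 2
        simp only [t]
        field_simp
        ring

lemma card_lt_abs_signSum_le {m : ℕ} (hm : 0 < m) {T : ℝ} (hT : 0 ≤ T) :
    (#{x : Fin m → Bool | T < |signSum x|} : ℝ) ≤ 2 ^ (m + 1) * exp (-T ^ 2 / (2 * m)) := by
  have hsub : ({x | T < |signSum x|} : Finset (Fin m → Bool))
      ⊆ ({x | T ≤ signSum x} : Finset _) ∪ ({x | T ≤ -signSum x} : Finset _) := by
    intro x hx
    simp only [mem_union, mem_filter, mem_univ, true_and] at hx ⊢
    rcases abs_cases (signSum x) with ⟨h, _⟩ | ⟨h, _⟩ <;> rw [h] at hx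
    exacts [.inl hx.le, .inr hx.le]
  have hupper := card_le_of_sum_exp_eq_two_mul_cosh_pow hm _ (sum_exp_mul_signSum m) hT
  have hlower := card_le_of_sum_exp_eq_two_mul_cosh_pow hm (fun x => -signSum x)
    (fun t => by simpa [cosh_neg] using sum_exp_mul_signSum m (-t)) hT
  calc (#{x : Fin m → Bool | T < |signSum x|} : ℝ)
      ≤ #{x : Fin m → Bool | T ≤ signSum x} + #{x : Fin m → Bool | T ≤ -signSum x} := by
        exact_mod_cast (card_le_card hsub).trans (card_union_le _ _)
    _ ≤ 2 ^ (m + 1) * exp (-T ^ 2 / (2 * m)) := by rw [pow_succ]; linarith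

def shiftProducts {n : ℕ} (k : ℕ) (b : Fin n → Bool) : Fin (n - k) → Bool :=
  fun j => b ⟨j, by omega⟩ == b ⟨j + k, by omega⟩

lemma boolSign_beq (a c : Bool) : boolSign (a == c) = boolSign a * boolSign c := by
  cases a <;> cases c <;> simp [boolSign]

lemma rad_of_lt {n : ℕ} (b : Fin n → Bool) {j : ℕ} (h : j < n) :
    rad b j = boolSign (b ⟨j, h⟩) := by
  simp [rad, h, boolSign]

lemma autocorr_eq_signSum_shiftProducts {n : ℕ} (b : Fin n → Bool) (k : ℕ) :
    autocorr b k = signSum (shiftProducts k b) := by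
  rw [autocorr, signSum, ← Fin.sum_univ_eq_sum_range]
  refine sum_congr rfl fun j _ => ?_
  rw [shiftProducts, boolSign_beq, rad_of_lt b (by omega), rad_of_lt b (by omega)]

lemma Bool.eq_of_beq_eq_beq_left {a x y : Bool} (h : (a == x) = (a == y)) : x = y := by
  revert a x y; decide

lemma injective_prefix_prod_shiftProducts {n k : ℕ} (hk : 0 < k) (hkn : k ≤ n) :
    Function.Injective fun b : Fin n → Bool => (fun i : Fin k => b (Fin.castLE hkn i),
      shiftProducts k b) := by
  intro b b' h
  simp only [Prod.mk.injEq, funext_iff] at h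
  obtain ⟨hprefix, hshift⟩ := h
  suffices ∀ j (hj : j < n), b ⟨j, hj⟩ = b' ⟨j, hj⟩ from funext fun j => this j j.2
  intro j
  induction j using Nat.strong_induction_on with
  | _ j ih =>
    intro hj
    by_cases hjk : j < k
    · exact hprefix ⟨j, hjk⟩
    · have hstep := hshift ⟨j - k, by omega⟩
      simp only [shiftProducts, Nat.sub_add_cancel (not_lt.1 hjk), ih (j - k) (by omega)] at hstep
      exact Bool.eq_of_beq_eq_beq_left hstep

lemma card_lt_abs_autocorr_le {n k : ℕ} (hk : 0 < k) (hkn : k ≤ n) (T : ℝ) :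
    #{b : Fin n → Bool | T < |autocorr b k|}
      ≤ 2 ^ k * #{x : Fin (n - k) → Bool | T < |signSum x|} := by
  calc #{b : Fin n → Bool | T < |autocorr b k|}
      ≤ #((univ : Finset (Fin k → Bool)) ×ˢ
          ({x : Fin (n - k) → Bool | T < |signSum x|} : Finset _)) := by
        refine card_le_card_of_injOn _ (fun b hb => ?_)
          (injective_prefix_prod_shiftProducts hk hkn).injOn
        simpa [autocorr_eq_signSum_shiftProducts] using hb
    _ = 2 ^ k * #{x : Fin (n - k) → Bool | T < |signSum x|} := by simp [card_product]

-- `0 ≤ T` is needed because the supremum over the empty range `n ≤ 1` is `0`.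
lemma psl_le_of_forall_abs_autocorr_le {n : ℕ} (b : Fin n → Bool) {T : ℝ} (hT : 0 ≤ T)
    (h : ∀ k ∈ Icc 1 (n - 1), |autocorr b k| ≤ T) : psl b ≤ T :=
  Real.iSup_le (fun k => Real.iSup_le (h k) hT) hT

lemma card_lt_psl_le_sum {n : ℕ} {T : ℝ} (hT : 0 ≤ T) :
    #{b : Fin n → Bool | T < psl b}
      ≤ ∑ k ∈ Icc 1 (n - 1), #{b : Fin n → Bool | T < |autocorr b k|} := by
  refine (card_le_card fun b hb => ?_).trans card_biUnion_le
  simp only [mem_filter, mem_univ, true_and, mem_biUnion] at hb ⊢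
  by_contra! h
  exact (psl_le_of_forall_abs_autocorr_le b hT h).not_gt hb

lemma card_lt_psl_le_sum_exp {n : ℕ} {T : ℝ} (hT : 0 ≤ T) :
    (#{b : Fin n → Bool | T < psl b} : ℝ)
      ≤ ∑ k ∈ Icc 1 (n - 1), 2 ^ (n + 1) * exp (-T ^ 2 / (2 * (n - k))) := by
  refine (Nat.cast_le.2 (card_lt_psl_le_sum hT)).trans ?_
  push_cast
  refine sum_le_sum fun k hk => ?_
  obtain ⟨hk1, hkn⟩ := mem_Icc.1 hk
  have hnk : ((n - k : ℕ) : ℝ) = n - k := Nat.cast_sub (by omega)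
  calc (#{b : Fin n → Bool | T < |autocorr b k|} : ℝ)
      ≤ 2 ^ k * #{x : Fin (n - k) → Bool | T < |signSum x|} := by
        exact_mod_cast card_lt_abs_autocorr_le hk1 (by omega) T
    _ ≤ 2 ^ k * (2 ^ (n - k + 1) * exp (-T ^ 2 / (2 * (n - k)))) := by
        rw [← hnk]; gcongr; exact card_lt_abs_signSum_le (by omega) hT
    _ = 2 ^ (n + 1) * exp (-T ^ 2 / (2 * (n - k))) := by
        rw [← mul_assoc, ← pow_add, ← add_assoc, Nat.add_sub_cancel' (by omega : k ≤ n)]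

lemma sum_Ico_exp_neg_pow_le {a : ℝ} (ha : 0 < a) (m : ℕ) :
    ∑ k ∈ Ico 1 m, exp (-a) ^ k ≤ 1 / a := by
  have hr : exp (-a) < 1 := exp_lt_one_iff.2 (by linarith)
  refine (geom_sum_Ico_le_of_lt_one (exp_pos _).le hr).trans ?_
  rw [pow_one, div_le_div_iff₀ (by linarith) ha]
  have h := mul_le_mul_of_nonneg_left (add_one_le_exp a) (exp_pos (-a)).le
  rw [← exp_add, neg_add_cancel, exp_zero] at h
  linarith

lemma sum_exp_neg_mul_div_sub_le {n : ℕ} {L : ℝ} (hL : 0 < L) :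
    ∑ k ∈ Icc 1 (n - 1), exp (-(n * L) / (n - k)) ≤ exp (-L) * (n / L) := by
  rcases Nat.eq_zero_or_pos n with rfl | hn
  · simp
  have hn' : (0 : ℝ) < n := by exact_mod_cast hn
  rw [show Icc 1 (n - 1) = Ico 1 n by ext; simp only [mem_Icc, mem_Ico]; omega]
  have hterm : ∀ k ∈ Ico 1 n, exp (-(n * L) / (n - k)) ≤ exp (-L) * exp (-(L / n)) ^ k := by
    intro k hk
    have hkn : (k : ℝ) < n := by exact_mod_cast (mem_Ico.1 hk).2
    -- `n / (n - k) ≥ 1 + k / n` amounts to `n ^ 2 ≥ n ^ 2 - k ^ 2`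
    have key : L + k * (L / n) ≤ n * L / (n - k) := by
      rw [le_div_iff₀ (by linarith)]
      field_simp
      nlinarith [sq_nonneg (k : ℝ)]
    rw [← exp_nat_mul, ← exp_add, exp_le_exp, neg_div]
    linarith
  calc ∑ k ∈ Ico 1 n, exp (-(n * L) / (n - k))
      ≤ ∑ k ∈ Ico 1 n, exp (-L) * exp (-(L / n)) ^ k := sum_le_sum hterm
    _ = exp (-L) * ∑ k ∈ Ico 1 n, exp (-(L / n)) ^ k := (mul_sum ..).symm
    _ ≤ exp (-L) * (n / L) := by
        gcongr
        simpa using sum_Ico_exp_neg_pow_le (div_pos hL hn') n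

lemma card_sqrt_lt_psl_le {n : ℕ} {L : ℝ} (hL : 0 < L) :
    (#{b : Fin n → Bool | √(2 * n * L) < psl b} : ℝ)
      ≤ 2 ^ n * (2 * exp (-L) * (n / L)) := by
  have hsq : √(2 * n * L) ^ 2 = 2 * n * L := sq_sqrt (by positivity)
  calc (#{b : Fin n → Bool | √(2 * n * L) < psl b} : ℝ)
      ≤ ∑ k ∈ Icc 1 (n - 1), 2 ^ (n + 1) * exp (-(n * L) / (n - k)) := by
        convert card_lt_psl_le_sum_exp (sqrt_nonneg _) using 4 with k
        rw [hsq, mul_assoc, neg_div, neg_div, mul_div_mul_left _ _ two_ne_zero]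
    _ ≤ 2 ^ (n + 1) * (exp (-L) * (n / L)) := by
        rw [← mul_sum]; gcongr; exact sum_exp_neg_mul_div_sub_le hL
    _ = 2 ^ n * (2 * exp (-L) * (n / L)) := by ring

noncomputable def logThreshold (ε x : ℝ) : ℝ := log x - log (log x) + log 2 + ε

lemma tendsto_logThreshold_div_log (ε : ℝ) :
    Tendsto (fun x => logThreshold ε x / log x) atTop (𝓝 1) := by
  have hloglog : Tendsto (fun x => log (log x) / log x) atTop (𝓝 0) :=
    isLittleO_log_id_atTop.tendsto_div_nhds_zero.comp tendsto_log_atTop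
  have hconst : Tendsto (fun x => (log 2 + ε) / log x) atTop (𝓝 0) :=
    tendsto_const_nhds.div_atTop tendsto_log_atTop
  have hlim := (tendsto_const_nhds (x := (1 : ℝ))).sub hloglog |>.add hconst
  rw [sub_zero, add_zero] at hlim
  refine hlim.congr' ?_
  filter_upwards [tendsto_log_atTop.eventually_gt_atTop 0] with x hx
  simp only [logThreshold]
  field_simp
  ring

lemma two_mul_exp_neg_logThreshold_mul (ε : ℝ) {x : ℝ} (hx : 1 < x) :
    2 * exp (-logThreshold ε x) * x = exp (-ε) * log x := by
  have hlog : 0 < log x := log_pos hx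
  rw [logThreshold,
    show -(log x - log (log x) + log 2 + ε) = log (log x) - log x - log 2 - ε by ring,
    exp_sub, exp_sub, exp_sub, exp_log hlog, exp_log (by linarith), exp_log two_pos, exp_neg ε]
  field_simp

lemma eventually_two_mul_exp_neg_logThreshold_lt_one {ε : ℝ} (hε : 0 < ε) :
    ∀ᶠ x in atTop, 0 < logThreshold ε x ∧
      2 * exp (-logThreshold ε x) * (x / logThreshold ε x) < 1 := by
  have hlim :
      Tendsto (fun x => exp (-ε) * (logThreshold ε x / log x)⁻¹) atTop (𝓝 (exp (-ε))) := by
    simpa using ((tendsto_logThreshold_div_log ε).inv₀ one_ne_zero).const_mul (exp (-ε))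
  filter_upwards [hlim.eventually_lt_const (exp_lt_one_iff.2 (neg_lt_zero.2 hε)),
    (tendsto_logThreshold_div_log ε).eventually_const_lt zero_lt_one,
    eventually_gt_atTop 1] with x hlt hpos hx
  have hlog : 0 < log x := log_pos hx
  refine ⟨(div_pos_iff_of_pos_right hlog).1 hpos, ?_⟩
  rwa [← mul_div_assoc, two_mul_exp_neg_logThreshold_mul ε hx, mul_div_assoc, ← inv_div]

theorem stmt_13 (ε : ℝ) (hε : 0 < ε) :
    ∃ N : ℕ, ∀ n ≥ N,
      (((Finset.univ.filter fun b : Fin n → Bool =>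
          Real.sqrt (2 * n * (Real.log n - Real.log (Real.log n) + Real.log 2 + ε))
            < psl b).card : ℝ) / 2 ^ n < 1) ∧
      ∃ b : Fin n → Bool,
        psl b ≤ Real.sqrt (2 * n * (Real.log n - Real.log (Real.log n) + Real.log 2 + ε)) := by
  obtain ⟨N, hN⟩ := eventually_atTop.1 <|
    tendsto_natCast_atTop_atTop.eventually (eventually_two_mul_exp_neg_logThreshold_lt_one hε)
  refine ⟨N, fun n hn => ?_⟩
  obtain ⟨hL, hsmall⟩ := hN n hn
  set S : Finset (Fin n → Bool) := {b | √(2 * n * logThreshold ε n) < psl b}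
  have hlt : (#S : ℝ) < 2 ^ n :=
    (card_sqrt_lt_psl_le hL).trans_lt (mul_lt_of_lt_one_right (by positivity) hsmall)
  refine ⟨(div_lt_one (by positivity)).2 hlt, ?_⟩
  have hcard : #S < #(univ : Finset (Fin n → Bool)) := by
    simpa using (by exact_mod_cast hlt : #S < 2 ^ n)
  obtain ⟨b, -, hb⟩ := exists_mem_notMem_of_card_lt_card hcard
  exact ⟨b, not_lt.1 fun h => hb (mem_filter.2 ⟨mem_univ b, h⟩)⟩
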